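/- arXiv:2206.09436 — 2 statements merged into one kernel-verified Lean document; each statement's English description precedes it below -/
import Mathlib

section
/- Let f(t) = t^m − ∑_{i=0}^{m-1} a_i t^i ∈ R = D[t;σ,δ] with m > 1 and let c ∈ D. Then the following are equivalent: (1) c is semi-invariant with respect to f, i.e. fc ∈ Df; (2) c ∈ L = Nuc_r(S_f) ∩ D; (3) σ^m(c)·a_k = ∑_{j=k}^{m-1} a_j·Δ_{j,k}(c) − Δ_{m,k}(c) for all k ∈ {0,1,…,m−1}. -/
/-- `g` right-divides `f`, i.e. `f ∈ Rg`. -/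
def RDvd {R : Type} [Ring R] (g f : R) : Prop := ∃ q : R, f = q * g

/-- `f` is right-invariant : `f·R ⊆ R·f`. -/
def RightInvariant {R : Type} [Ring R] (f : R) : Prop := ∀ r : R, ∃ q : R, f * r = q * f

/-- `(f, g)_r = 1`: the only common right divisors of `f` and `g` are units. -/
def RightCoprimeWith {R : Type} [Ring R] (f g : R) : Prop :=
  ∀ e : R, RDvd e f → RDvd e g → IsUnit e

/-- `f` and `g` are similar: `R/Rf ≅ R/Rg` as left `R`-modules. -/
def SimilarP {R : Type} [Ring R] (f g : R) : Prop :=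
  Nonempty ((R ⧸ (Submodule.span R {f})) ≃ₗ[R] (R ⧸ (Submodule.span R {g})))

/-- `b` is a bound of `f`: `b` is right-invariant, `f` right-divides `b`, and `Rb` is the
largest two-sided ideal contained in `Rf`. -/
def IsBound {R : Type} [Ring R] (f b : R) : Prop :=
  b ≠ 0 ∧ RightInvariant b ∧ RDvd f b ∧
    ∀ g : R, g ≠ 0 → RightInvariant g → RDvd f g → RDvd b g

/-- Data witnessing that the ring `R` is a skew polynomial ring `D[t;sigma,delta]`:
`iota` embeds the coefficients, `t` is the indeterminate with `t*a = sigma(a)*t + delta(a)`,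
every element has a unique finite coefficient representation, and `rmod g f` is the
remainder of `g` upon right division by `f`. -/
structure SkewPolyData (D : Type) [DivisionRing D] (σ : D →+* D) (δ : D → D)
    (R : Type) [Ring R] where
  ι : D →+* R
  t : R
  coeff : R → (ℕ →₀ D)
  rmod : R → R → R
  t_mul : ∀ a : D, t * ι a = ι (σ a) * t + ι (δ a)
  sum_coeff : ∀ x : R, ((coeff x).sum fun i a => ι a * t ^ i) = x
  coeff_sum : ∀ c : ℕ →₀ D, coeff (c.sum fun i a => ι a * t ^ i) = c
  rmod_spec : ∀ g f : R, f ≠ 0 →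
    (∃ q : R, g = q * f + rmod g f) ∧
      (coeff (rmod g f)).support.max < (coeff f).support.max

namespace SkewPolyData

variable {D : Type} [DivisionRing D] {σ : D →+* D} {δ : D → D}
variable {R : Type} [Ring R] (S : SkewPolyData D σ δ R)

/-- The degree of a skew polynomial (`⊥` for `0`). -/
noncomputable def deg (x : R) : WithBot ℕ := (S.coeff x).support.max

/-- `f` is monic of degree `m`. -/
def MonicDeg (f : R) (m : ℕ) : Prop := S.coeff f m = 1 ∧ S.deg f = (m : WithBot ℕ)

/-- `f` is irreducible in `R`: it is non-constant and is not a product of two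
polynomials of strictly smaller degree. -/
def Irred (f : R) : Prop :=
  (1 : WithBot ℕ) ≤ S.deg f ∧
    ∀ g h : R, f = g * h → S.deg g < S.deg f → S.deg h < S.deg f → False

/-- multiplication in the Petit algebra `S_f` (on representatives in `R`). -/
def pmul (f a b : R) : R := S.rmod (a * b) f

/-- the underlying set of the Petit algebra `S_f`: polynomials of degree `< deg f`. -/
def carr (f : R) : Set R := {x : R | S.deg x < S.deg f}

/-- the right nucleus of the Petit algebra `S_f`. -/
def NucR (f : R) : Set R :=
  {x : R | x ∈ S.carr f ∧ ∀ a ∈ S.carr f, ∀ b ∈ S.carr f,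
    S.pmul f (S.pmul f a b) x = S.pmul f a (S.pmul f b x)}

/-- the nucleus (left ∩ middle ∩ right) of the Petit algebra `S_f`. -/
def NucAll (f : R) : Set R :=
  {x : R | x ∈ S.carr f ∧
    (∀ a ∈ S.carr f, ∀ b ∈ S.carr f,
      S.pmul f (S.pmul f x a) b = S.pmul f x (S.pmul f a b)) ∧
    (∀ a ∈ S.carr f, ∀ b ∈ S.carr f,
      S.pmul f (S.pmul f a x) b = S.pmul f a (S.pmul f x b)) ∧
    (∀ a ∈ S.carr f, ∀ b ∈ S.carr f,
      S.pmul f (S.pmul f a b) x = S.pmul f a (S.pmul f b x))}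

/-- the eigenring `E(f)` of `f`, as the set of its canonical representatives
(polynomials of degree `< deg f` with `f·g ∈ Rf`), with multiplication `pmul f`. -/
def EigR (f : R) : Set R :=
  {x : R | S.deg x < S.deg f ∧ ∃ q : R, f * x = q * f}

/-- evaluation of a polynomial with coefficients in the subfield `K` of `D`
at the (central) element `x₀` of `R`. -/
noncomputable def ceval (K : Subfield D) (x₀ : R) (p : Polynomial K) : R :=
  Polynomial.eval₂ (S.ι.comp K.subtype) x₀ p

/-- `h = p(x₀)` is the minimal central left multiple of `f`: `p ∈ K[x]` is monic of
minimal degree such that `f` right-divides `p(x₀)`, and `h = p(x₀)`. -/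
def IsMclm (K : Subfield D) (x₀ : R) (f h : R) (p : Polynomial K) : Prop :=
  p.Monic ∧ h = S.ceval K x₀ p ∧ RDvd f h ∧
    ∀ q : Polynomial K, q.Monic → RDvd f (S.ceval K x₀ q) → p.degree ≤ q.degree

/-- the subset `X` of `R` has a basis of size `N` over the set of coefficients `Fc ⊆ D`. -/
def RelDimR (Fc : Set D) (X : Set R) (N : ℕ) : Prop :=
  ∃ b : Fin N → R, (∀ i, b i ∈ X) ∧
    ∀ x ∈ X, ∃! cf : Fin N → D, (∀ i, cf i ∈ Fc) ∧ x = ∑ i, S.ι (cf i) * b i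

/-- `ψ` restricts to an isomorphism of the subset `X` of the Petit algebra `S_f`
(with multiplication `∘_f`) onto the ring `B`. -/
def SubMulIso (f : R) (X : Set R) (B : Type) [Ring B] (ψ : R → B) : Prop :=
  Set.BijOn ψ X Set.univ ∧ ψ 1 = 1 ∧
    ∀ x ∈ X, ∀ y ∈ X,
      ψ (x + y) = ψ x + ψ y ∧ ψ (S.pmul f x y) = ψ x * ψ y

end SkewPolyData

/-- the subset `X ⊆ D` has a basis of size `N` over the set of coefficients `Fc ⊆ D`. -/
def RelDimD {D : Type} [DivisionRing D] (Fc X : Set D) (N : ℕ) : Prop :=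
  ∃ b : Fin N → D, (∀ i, b i ∈ X) ∧
    ∀ x ∈ X, ∃! cf : Fin N → D, (∀ i, cf i ∈ Fc) ∧ x = ∑ i, cf i * b i

theorem deltaZero {D : Type} [DivisionRing D] {δ : D → D}
    (hadd : ∀ x y : D, δ (x + y) = δ x + δ y) : δ 0 = 0 := by
  have h := hadd 0 0
  rw [add_zero] at h
  exact left_eq_add.mp h

theorem deltaOne {D : Type} [DivisionRing D] {σ : D →+* D} {δ : D → D}
    (hleib : ∀ x y : D, δ (x * y) = σ x * δ y + δ x * y) : δ 1 = 0 := by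
  have h := hleib 1 1
  rw [mul_one, map_one, one_mul, mul_one] at h
  exact left_eq_add.mp h

/-- the subfield `F = C ∩ Fix(σ) ∩ Const(δ)` of `D`. -/
def ctrSubfield {D : Type} [DivisionRing D] (σ : D →+* D) (δ : D → D)
    (hadd : ∀ x y : D, δ (x + y) = δ x + δ y)
    (hleib : ∀ x y : D, δ (x * y) = σ x * δ y + δ x * y) : Subfield D where
  carrier := {a : D | a ∈ Set.center D ∧ σ a = a ∧ δ a = 0}
  zero_mem' := ⟨Set.zero_mem_center, map_zero σ, deltaZero hadd⟩
  one_mem' := ⟨Set.one_mem_center, map_one σ, deltaOne (σ := σ) hleib⟩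
  add_mem' := fun ha hb =>
    ⟨Set.add_mem_center ha.1 hb.1, by rw [map_add, ha.2.1, hb.2.1],
      by rw [hadd, ha.2.2, hb.2.2, add_zero]⟩
  mul_mem' := fun ha hb =>
    ⟨Set.mul_mem_center ha.1 hb.1, by rw [map_mul, ha.2.1, hb.2.1],
      by rw [hleib, ha.2.2, hb.2.2, mul_zero, zero_mul, add_zero]⟩
  neg_mem' := fun {a} ha => by
    refine ⟨Set.neg_mem_center ha.1, by rw [map_neg, ha.2.1], ?_⟩
    have h := hadd a (-a)
    rw [add_neg_cancel, deltaZero hadd, ha.2.2, zero_add] at h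
    exact h.symm
  inv_mem' := fun a ha => by
    refine ⟨Set.inv_mem_center ha.1, by rw [map_inv₀, ha.2.1], ?_⟩
    by_cases h : a = 0
    · rw [h, inv_zero]; exact deltaZero hadd
    · have hl := hleib a a⁻¹
      rw [mul_inv_cancel₀ h, deltaOne (σ := σ) hleib, ha.2.2, zero_mul, add_zero] at hl
      rcases mul_eq_zero.mp hl.symm with h1 | h2
      · exact absurd (σ.injective (by rw [h1, map_zero])) h
      · exact h2


/-- `B` is a central algebra of degree `s` over the quotient `K[x]/(P)`:
there is a homomorphism `χ : K[x] →+* B` with kernel `(P)` whose range is the center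
of `B`, and `B` has a basis of size `s²` over the center, with coefficients
unique modulo `P`. -/
def IsCentralAlgModOfDeg {K : Type} [DivisionRing K] (P : Polynomial K)
    (B : Type) [Ring B] (s : ℕ) : Prop :=
  ∃ χ : Polynomial K →+* B, (∀ q : Polynomial K, χ q = 0 ↔ P ∣ q) ∧
    Set.range ⇑χ = Set.center B ∧
    ∃ bb : Fin (s * s) → B, ∀ x : B,
      ∃ cf : Fin (s * s) → Polynomial K, x = ∑ i, χ (cf i) * bb i ∧
        ∀ cf' : Fin (s * s) → Polynomial K,
          x = ∑ i, χ (cf' i) * bb i → ∀ i, P ∣ (cf i - cf' i)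

/-- `B` is a (finite-dimensional) central simple algebra over the field `K`. -/
def CentralSimpleOver (K : Type) [DivisionRing K] (B : Type) [Ring B] : Prop :=
  IsSimpleRing B ∧ ∃ χ : K →+* B, Function.Injective ⇑χ ∧ Set.range ⇑χ = Set.center B ∧
    ∃ (N : ℕ) (bb : Fin N → B), ∀ x : B, ∃! cf : Fin N → K, x = ∑ i, χ (cf i) * bb i

/-- The maps `Δ_{j,i}` associated with `(σ, δ)`. -/
def Delta {D : Type} [DivisionRing D] (σ : D →+* D) (δ : D → D) : ℕ → ℕ → D → D
  | 0, 0 => id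
  | 0, _ + 1 => fun _ => 0
  | j + 1, 0 => fun a => δ (Delta σ δ j 0 a)
  | j + 1, i + 1 => fun a => δ (Delta σ δ j (i + 1) a) + σ (Delta σ δ j i a)

/-- `χ` realises an isomorphism from the commutative quotient `K[x]/(P)` onto the
subset `X` of the Petit algebra `S_f` (with multiplication `∘_f`). -/
def QuotMulIso {D : Type} [DivisionRing D] {σ : D →+* D} {δ : D → D} {R : Type} [Ring R]
    (S : SkewPolyData D σ δ R) (f : R) (X : Set R) (K : Subfield D)
    (P : Polynomial ↥K) (χ : Polynomial ↥K → R) : Prop :=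
  (∀ q, χ q ∈ X) ∧ χ 1 = 1 ∧ (∀ q r, χ (q + r) = χ q + χ r) ∧
    (∀ q r, χ (q * r) = S.pmul f (χ q) (χ r)) ∧
    (∀ x ∈ X, ∃ q, χ q = x) ∧ (∀ q, χ q = 0 ↔ P ∣ q)

/-- A description of the right nucleus of the Petit algebra `S_f` as a central division
algebra `B` of degree `s` over `E = K[x]/(P)`, together with a ring isomorphism
`R/Rh ≅ M_k(Nuc_r(S_f))` (given by a surjective ring homomorphism with kernel `Rh`). -/
structure NucCDADesc {D : Type} [DivisionRing D] {σ : D →+* D} {δ : D → D}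
    {R : Type} [Ring R] (S : SkewPolyData D σ δ R)
    (f h : R) (K : Subfield D) (P : Polynomial ↥K) (s k : ℕ) where
  B : Type
  [instB : DivisionRing B]
  ψ : R → B
  hψ : S.SubMulIso f (S.NucR f) B ψ
  hcda : IsCentralAlgModOfDeg P B s
  Φ : R →+* Matrix (Fin k) (Fin k) B
  hΦ : Function.Surjective ⇑Φ
  hker : ∀ x : R, Φ x = 0 ↔ ∃ q : R, x = q * h

/-- A description of the eigenring of an irreducible divisor `g` of `h` as a central
division algebra `B` of degree `sp` over `E = K[x]/(P)`, with `R/Rh ≅ M_k(B)` and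
`Nuc_r(S_f) ≅ M_l(B)` a central simple algebra of degree `l·sp` over `E`. -/
structure EigCDADesc {D : Type} [DivisionRing D] {σ : D →+* D} {δ : D → D}
    {R : Type} [Ring R] (S : SkewPolyData D σ δ R)
    (f h g : R) (K : Subfield D) (P : Polynomial ↥K) (l k sp : ℕ) where
  B : Type
  [instB : DivisionRing B]
  ψg : R → B
  hψg : S.SubMulIso g (S.EigR g) B ψg
  hcda : IsCentralAlgModOfDeg P B sp
  Φ : R →+* Matrix (Fin k) (Fin k) B
  hΦ : Function.Surjective ⇑Φ
  hker : ∀ x : R, Φ x = 0 ↔ ∃ q : R, x = q * h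
  ψ : R → Matrix (Fin l) (Fin l) B
  hψ : S.SubMulIso f (S.NucR f) (Matrix (Fin l) (Fin l) B) ψ
  hcsa : IsCentralAlgModOfDeg P (Matrix (Fin l) (Fin l) B) (l * sp)
  hsimple : IsSimpleRing (Matrix (Fin l) (Fin l) B)

/-- A description of the eigenring of `f` as a central simple algebra over the field `K`. -/
structure CSADesc {D : Type} [DivisionRing D] {σ : D →+* D} {δ : D → D}
    {R : Type} [Ring R] (S : SkewPolyData D σ δ R) (f : R) (K : Subfield D) where
  B : Type
  [instB : Ring B]
  ψ : R → B
  hψ : S.SubMulIso f (S.EigR f) B ψ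
  hcsa : CentralSimpleOver ↥K B

/-- A description of `R/Rh` as a semisimple Artinian ring, direct sum of the simple
Artinian rings `R/Rπᵢ`, of the decomposition of `R/Rf` into simple modules, and of
the right nucleus of `S_f` as `⊕ᵢ M_{rsᵢ}(E(fiᵢ))`. -/
structure SemisimpleDesc {D : Type} [DivisionRing D] {σ : D →+* D} {δ : D → D}
    {R : Type} [Ring R] (S : SkewPolyData D σ δ R)
    (f h : R) (z : ℕ) (π : Fin z → R) (fi : Fin z → R) (rs : Fin z → ℕ) where
  A : Fin z → Type
  [instA : ∀ i, Ring (A i)]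
  φ : ∀ i, R →+* A i
  hφsurj : ∀ i, Function.Surjective ⇑(φ i)
  hφker : ∀ i, ∀ x : R, φ i x = 0 ↔ ∃ q : R, x = q * π i
  hsimpleA : ∀ i, IsSimpleRing (A i)
  hartA : ∀ i, IsArtinianRing (A i)
  hss : IsSemisimpleRing ((i : Fin z) → A i)
  hart : IsArtinianRing ((i : Fin z) → A i)
  hPisurj : Function.Surjective ⇑(Pi.ringHom φ)
  hPiker : ∀ x : R, Pi.ringHom φ x = 0 ↔ ∃ q : R, x = q * h
  modIso : (R ⧸ (Submodule.span R {f})) ≃ₗ[R]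
      ((i : Fin z) → Fin (rs i) → (R ⧸ (Submodule.span R {fi i})))
  B : Fin z → Type
  [instB : ∀ i, Ring (B i)]
  ψg : ∀ i, R → B i
  hψg : ∀ i, S.SubMulIso (fi i) (S.EigR (fi i)) (B i) (ψg i)
  Ψ : R → ((i : Fin z) → Matrix (Fin (rs i)) (Fin (rs i)) (B i))
  hΨ : S.SubMulIso f (S.NucR f) ((i : Fin z) → Matrix (Fin (rs i)) (Fin (rs i)) (B i)) Ψ
  hssNuc : IsSemisimpleRing ((i : Fin z) → Matrix (Fin (rs i)) (Fin (rs i)) (B i))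
  hartNuc : IsArtinianRing ((i : Fin z) → Matrix (Fin (rs i)) (Fin (rs i)) (B i))

/-- the subfield `F = C ∩ Fix(σ)` of `D` (for `δ = 0`). -/
def fixC {D : Type} [DivisionRing D] (σ : D →+* D) : Subfield D :=
  ctrSubfield σ (fun _ => 0) (fun _ _ => by simp) (fun _ _ => by simp)

/-- the subfield `F = C ∩ Const(δ)` of `D` (for `σ = id`). -/
def constC {D : Type} [DivisionRing D] (δ : D → D)
    (hadd : ∀ x y : D, δ (x + y) = δ x + δ y)
    (hleib : ∀ x y : D, δ (x * y) = x * δ y + δ x * y) : Subfield D :=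
  ctrSubfield (RingHom.id D) δ hadd (fun x y => by simpa using hleib x y)

/-!
Everything rests on the leading-coefficient formula `lc(x y) = lc(x) · σ^(deg x)(lc y)`: for
monic `f` of degree `m`, `deg (q f) = deg q + m`, so remainders of right division by `f` are
unique and a multiple `q f` of degree `≤ m` has a constant cofactor `q`.

If `f c = c' f`, reducing modulo `f` commutes with right multiplication by `c`, so `c` lies in
the right nucleus. Conversely, associativity for the triple `(t^(m-1), t, c)` says that
`(t^m - f) c` and `t^m c` have the same remainder, i.e. `f c ∈ R f`, and the cofactor is then a
constant. Finally `f c = Σ_k (Δ_{m,k}(c) - Σ_j a_j Δ_{j,k}(c)) t^k`, and comparing coefficients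
with `c' f` gives `c' = σ^m(c)` at `t^m` and condition (3) at the lower powers.
-/

section Delta

variable {D : Type} [DivisionRing D] {σ : D →+* D} {δ : D → D}

theorem Delta_eq_zero_of_lt (hδadd : ∀ x y : D, δ (x + y) = δ x + δ y) :
    ∀ {j i : ℕ}, j < i → ∀ b : D, Delta σ δ j i b = 0
  | 0, _ + 1, _, _ => rfl
  | j + 1, i + 1, hji, b => by
    change δ (Delta σ δ j (i + 1) b) + σ (Delta σ δ j i b) = 0
    rw [Delta_eq_zero_of_lt hδadd (by omega), Delta_eq_zero_of_lt hδadd (by omega),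
      deltaZero hδadd, map_zero, add_zero]

theorem Delta_self (hδadd : ∀ x y : D, δ (x + y) = δ x + δ y) :
    ∀ (j : ℕ) (b : D), Delta σ δ j j b = (⇑σ)^[j] b
  | 0, _ => rfl
  | j + 1, b => by
    change δ (Delta σ δ j (j + 1) b) + σ (Delta σ δ j j b) = _
    rw [Delta_eq_zero_of_lt hδadd (Nat.lt_succ_self j), deltaZero hδadd, zero_add,
      Delta_self hδadd j, Function.iterate_succ_apply']

end Delta

namespace SkewPolyData

variable {D : Type} [DivisionRing D] {σ : D →+* D} {δ : D → D}
variable {R : Type} [Ring R] (S : SkewPolyData D σ δ R)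

theorem coeff_add (x y : R) : S.coeff (x + y) = S.coeff x + S.coeff y := by
  rw [← S.coeff_sum (S.coeff x + S.coeff y),
    Finsupp.sum_add_index' (fun _ => by simp) fun _ _ _ => by rw [map_add, add_mul],
    S.sum_coeff, S.sum_coeff]

theorem coeff_sub (x y : R) : S.coeff (x - y) = S.coeff x - S.coeff y :=
  map_sub (AddMonoidHom.mk' S.coeff S.coeff_add) x y

theorem coeff_finset_sum {ι : Type} (s : Finset ι) (g : ι → R) :
    S.coeff (∑ i ∈ s, g i) = ∑ i ∈ s, S.coeff (g i) :=
  map_sum (AddMonoidHom.mk' S.coeff S.coeff_add) g s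

theorem coeff_zero : S.coeff (0 : R) = 0 :=
  map_zero (AddMonoidHom.mk' S.coeff S.coeff_add)

theorem coeff_injective : Function.Injective S.coeff := fun x y h => by
  rw [← S.sum_coeff x, ← S.sum_coeff y, h]

theorem coeff_monomial (b : D) (i : ℕ) : S.coeff (S.ι b * S.t ^ i) = Finsupp.single i b := by
  rw [← S.coeff_sum (Finsupp.single i b), Finsupp.sum_single_index (by simp)]

theorem coeff_iota (b : D) : S.coeff (S.ι b) = Finsupp.single 0 b := by
  simpa using S.coeff_monomial b 0

theorem coeff_iota_mul (b : D) (x : R) (k : ℕ) : S.coeff (S.ι b * x) k = b * S.coeff x k := by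
  have h : S.ι b * x = (b • S.coeff x).sum fun i a => S.ι a * S.t ^ i := by
    rw [Finsupp.sum_smul_index (by simp)]
    conv_lhs => rw [← S.sum_coeff x]
    simp only [Finsupp.mul_sum, ← mul_assoc, ← map_mul]
  rw [h, S.coeff_sum, Finsupp.smul_apply, smul_eq_mul]

theorem coeff_mul_t_pow (x : R) (j k : ℕ) :
    S.coeff (x * S.t ^ j) k = if j ≤ k then S.coeff x (k - j) else 0 := by
  have h : x * S.t ^ j = ((S.coeff x).mapDomain (· + j)).sum fun i a => S.ι a * S.t ^ i := by
    rw [Finsupp.sum_mapDomain_index (by simp) (by simp [add_mul])]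
    conv_lhs => rw [← S.sum_coeff x]
    simp only [Finsupp.sum_mul, mul_assoc, ← pow_add]
  rw [h, S.coeff_sum]
  split_ifs with hjk
  · obtain ⟨l, rfl⟩ := Nat.exists_eq_add_of_le' hjk
    rw [Nat.add_sub_cancel, Finsupp.mapDomain_apply (add_left_injective j)]
  · exact Finsupp.mapDomain_of_notMem_range _ _ fun ⟨l, hl⟩ => hjk (by simp at hl; omega)

theorem coeff_t_mul (hδadd : ∀ x y : D, δ (x + y) = δ x + δ y) (x : R) :
    S.coeff (S.t * x) = (S.coeff x).mapRange δ (deltaZero hδadd) +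
      ((S.coeff x).mapRange σ (map_zero σ)).mapDomain Nat.succ := by
  rw [← S.coeff_sum (_ + _), Finsupp.sum_add_index' (by simp) (by simp [add_mul]),
    Finsupp.sum_mapDomain_index (by simp) (by simp [add_mul]),
    Finsupp.sum_mapRange_index (by simp), Finsupp.sum_mapRange_index (by simp),
    ← Finsupp.sum_add]
  conv_lhs => rw [← S.sum_coeff x]
  rw [Finsupp.mul_sum]
  refine congrArg _ (Finsupp.sum_congr fun i _ => ?_)
  rw [← mul_assoc, S.t_mul, add_mul, add_comm, mul_assoc, ← pow_succ']

theorem coeff_t_pow_mul_iota (hδadd : ∀ x y : D, δ (x + y) = δ x + δ y) (b : D) (i k : ℕ) :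
    S.coeff (S.t ^ i * S.ι b) k = Delta σ δ i k b := by
  induction i generalizing k with
  | zero => cases k <;> simp [S.coeff_iota, Delta]
  | succ i ih =>
    rw [pow_succ', mul_assoc, S.coeff_t_mul hδadd, Finsupp.add_apply]
    cases k with
    | zero =>
      rw [Finsupp.mapDomain_of_notMem_range _ _ (by simp), add_zero, Finsupp.mapRange_apply, ih]
      rfl
    | succ k =>
      rw [Finsupp.mapDomain_apply Nat.succ_injective, Finsupp.mapRange_apply,
        Finsupp.mapRange_apply, ih, ih]
      rfl

theorem coeff_mul (hδadd : ∀ x y : D, δ (x + y) = δ x + δ y) (x y : R) (k : ℕ) :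
    S.coeff (x * y) k = ∑ i ∈ (S.coeff x).support, ∑ j ∈ (S.coeff y).support,
      if j ≤ k then S.coeff x i * Delta σ δ i (k - j) (S.coeff y j) else 0 := by
  conv_lhs => rw [← S.sum_coeff x, ← S.sum_coeff y]
  rw [Finsupp.sum, Finset.sum_mul]
  simp only [Finsupp.sum, Finset.mul_sum, S.coeff_finset_sum, Finsupp.finsetSum_apply]
  refine Finset.sum_congr rfl fun i _ => Finset.sum_congr rfl fun j _ => ?_
  rw [mul_assoc, ← mul_assoc (S.t ^ i), S.coeff_iota_mul, S.coeff_mul_t_pow,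
    S.coeff_t_pow_mul_iota hδadd, mul_ite, mul_zero]

theorem deg_le_iff (x : R) (n : ℕ) : S.deg x ≤ n ↔ ∀ k, n < k → S.coeff x k = 0 := by
  simp only [deg, Finset.max_le_iff, Finsupp.mem_support_iff]
  exact forall_congr' fun k => by rw [not_imp_comm, not_le, ← Nat.cast_withBot, Nat.cast_lt]

theorem le_deg_of_coeff_ne_zero {x : R} {k : ℕ} (h : S.coeff x k ≠ 0) :
    (k : WithBot ℕ) ≤ S.deg x :=
  Finset.le_max (Finsupp.mem_support_iff.mpr h)

theorem coeff_eq_zero_of_deg_lt {x : R} {n k : ℕ} (hx : S.deg x < n) (hk : n ≤ k) :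
    S.coeff x k = 0 := by
  by_contra h
  exact absurd ((S.le_deg_of_coeff_ne_zero h).trans_lt hx) (by simpa using hk)

theorem deg_lt_iff (x : R) (n : ℕ) : S.deg x < n ↔ ∀ k, n ≤ k → S.coeff x k = 0 := by
  refine ⟨fun hx k hk => S.coeff_eq_zero_of_deg_lt hx hk, fun h => ?_⟩
  cases n with
  | zero =>
    have hx : S.coeff x = 0 := Finsupp.ext fun k => h k k.zero_le
    simp [deg, hx]
  | succ n =>
    exact ((S.deg_le_iff x n).mpr fun k hk => h k hk).trans_lt
      (by exact_mod_cast n.lt_succ_self)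

theorem le_of_mem_support {x : R} {n i : ℕ} (hx : S.deg x ≤ n)
    (hi : i ∈ (S.coeff x).support) : i ≤ n :=
  not_lt.mp fun h => Finsupp.mem_support_iff.mp hi ((S.deg_le_iff x n).mp hx i h)

theorem deg_sub_lt {x y : R} {n : ℕ} (hx : S.deg x < n) (hy : S.deg y < n) :
    S.deg (x - y) < n :=
  (S.deg_lt_iff _ n).mpr fun k hk => by
    rw [S.coeff_sub, Finsupp.sub_apply, S.coeff_eq_zero_of_deg_lt hx hk,
      S.coeff_eq_zero_of_deg_lt hy hk, sub_zero]

theorem eq_iota_coeff_zero {x : R} (hx : S.deg x ≤ (0 : ℕ)) : x = S.ι (S.coeff x 0) :=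
  S.coeff_injective <| Finsupp.ext fun k => by
    rw [S.coeff_iota]
    cases k with
    | zero => rw [Finsupp.single_eq_same]
    | succ k => rw [Finsupp.single_eq_of_ne (by omega), (S.deg_le_iff x 0).mp hx _ k.succ_pos]

theorem coeff_t_pow (i : ℕ) : S.coeff (S.t ^ i) = Finsupp.single i 1 := by
  simpa using S.coeff_monomial 1 i

theorem deg_t_pow_le (i : ℕ) : S.deg (S.t ^ i) ≤ i :=
  (S.deg_le_iff _ i).mpr fun k hk => by rw [S.coeff_t_pow, Finsupp.single_eq_of_ne (by omega)]

theorem deg_iota_le (b : D) : S.deg (S.ι b) ≤ (0 : ℕ) :=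
  (S.deg_le_iff _ 0).mpr fun k hk => by rw [S.coeff_iota, Finsupp.single_eq_of_ne (by omega)]

theorem deg_mul_le (hδadd : ∀ x y : D, δ (x + y) = δ x + δ y) {x y : R} {d e : ℕ}
    (hx : S.deg x ≤ d) (hy : S.deg y ≤ e) : S.deg (x * y) ≤ (d + e : ℕ) := by
  refine (S.deg_le_iff _ _).mpr fun k hk => ?_
  rw [S.coeff_mul hδadd]
  refine Finset.sum_eq_zero fun i hi => Finset.sum_eq_zero fun j hj => ?_
  have := S.le_of_mem_support hx hi
  have := S.le_of_mem_support hy hj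
  rw [if_pos (by omega), Delta_eq_zero_of_lt hδadd (by omega), mul_zero]

theorem coeff_mul_add_of_deg_le (hδadd : ∀ x y : D, δ (x + y) = δ x + δ y)
    {x y : R} {d e : ℕ} (hx : S.deg x ≤ d) (hy : S.deg y ≤ e) :
    S.coeff (x * y) (d + e) = S.coeff x d * (⇑σ)^[d] (S.coeff y e) := by
  rw [S.coeff_mul hδadd, Finset.sum_eq_single d, Finset.sum_eq_single e,
    if_pos (Nat.le_add_left e d), Nat.add_sub_cancel, Delta_self hδadd]
  · intro j hj hje
    have := S.le_of_mem_support hy hj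
    rw [if_pos (by omega), Delta_eq_zero_of_lt hδadd (by omega), mul_zero]
  · intro he
    rw [Finsupp.notMem_support_iff.mp he, if_pos (Nat.le_add_left e d), Nat.add_sub_cancel,
      Delta_self hδadd, iterate_map_zero, mul_zero]
  · intro i hi hid
    have := S.le_of_mem_support hx hi
    refine Finset.sum_eq_zero fun j hj => ?_
    have := S.le_of_mem_support hy hj
    rw [if_pos (by omega), Delta_eq_zero_of_lt hδadd (by omega), mul_zero]
  · intro hd
    simp [Finsupp.notMem_support_iff.mp hd]

theorem ne_zero_of_monicDeg {f : R} {m : ℕ} (hf : S.MonicDeg f m) : f ≠ 0 := fun h => by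
  simpa [h, S.coeff_zero] using hf.1

theorem deg_t_pow_sub_lt {f : R} {m : ℕ} (hf : S.MonicDeg f m) : S.deg (S.t ^ m - f) < m :=
  (S.deg_lt_iff _ m).mpr fun k hk => by
    rw [S.coeff_sub, Finsupp.sub_apply, S.coeff_t_pow]
    rcases hk.eq_or_lt with rfl | hk
    · rw [Finsupp.single_eq_same, hf.1, sub_self]
    · rw [Finsupp.single_eq_of_ne (by omega), (S.deg_le_iff f m).mp hf.2.le k hk, sub_zero]

theorem le_deg_mul_of_monicDeg (hδadd : ∀ x y : D, δ (x + y) = δ x + δ y)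
    {f q : R} {m d : ℕ} (hf : S.MonicDeg f m) (hq : S.coeff q d ≠ 0) :
    ((d + m : ℕ) : WithBot ℕ) ≤ S.deg (q * f) := by
  have hd : d ∈ (S.coeff q).support := Finsupp.mem_support_iff.mpr hq
  obtain ⟨top, htop⟩ := Finset.max_of_mem hd
  have hlead := S.coeff_mul_add_of_deg_le hδadd htop.le hf.2.le
  rw [hf.1, iterate_map_one, mul_one] at hlead
  calc ((d + m : ℕ) : WithBot ℕ) ≤ (top + m : ℕ) := by
        exact_mod_cast Nat.add_le_add_right (Finset.le_max_of_eq hd htop) m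
    _ ≤ S.deg (q * f) := S.le_deg_of_coeff_ne_zero
        (hlead ▸ Finsupp.mem_support_iff.mp (Finset.mem_of_max htop))

theorem eq_zero_of_deg_mul_lt (hδadd : ∀ x y : D, δ (x + y) = δ x + δ y) {f q : R} {m : ℕ}
    (hf : S.MonicDeg f m) (h : S.deg (q * f) < m) : q = 0 :=
  S.coeff_injective <| Finsupp.ext fun d => by
    rw [S.coeff_zero, Finsupp.zero_apply]
    by_contra hq
    have : d + m < m := by exact_mod_cast (S.le_deg_mul_of_monicDeg hδadd hf hq).trans_lt h
    omega

theorem eq_iota_of_deg_mul_le (hδadd : ∀ x y : D, δ (x + y) = δ x + δ y) {f q : R} {m : ℕ}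
    (hf : S.MonicDeg f m) (h : S.deg (q * f) ≤ m) : q = S.ι (S.coeff q 0) :=
  S.eq_iota_coeff_zero <| (S.deg_le_iff q 0).mpr fun d hd => by
    by_contra hq
    have : d + m ≤ m := by exact_mod_cast (S.le_deg_mul_of_monicDeg hδadd hf hq).trans h
    omega

theorem deg_rmod_lt {f : R} {m : ℕ} (hf : S.MonicDeg f m) (x : R) : S.deg (S.rmod x f) < m :=
  hf.2 ▸ (S.rmod_spec x f (S.ne_zero_of_monicDeg hf)).2

theorem exists_sub_rmod_eq_mul {f : R} (hf : f ≠ 0) (x : R) : ∃ q, x - S.rmod x f = q * f := by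
  obtain ⟨q, hq⟩ := (S.rmod_spec x f hf).1
  exact ⟨q, by rw [sub_eq_iff_eq_add, ← hq]⟩

theorem rmod_eq_of_sub_eq_mul (hδadd : ∀ x y : D, δ (x + y) = δ x + δ y)
    {f x q r : R} {m : ℕ} (hf : S.MonicDeg f m) (h : x - r = q * f) (hr : S.deg r < m) :
    S.rmod x f = r := by
  obtain ⟨q', hq'⟩ := S.exists_sub_rmod_eq_mul (S.ne_zero_of_monicDeg hf) x
  have hdiff : (q - q') * f = S.rmod x f - r := by rw [sub_mul, ← h, ← hq']; abel
  have hq : q - q' = 0 :=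
    S.eq_zero_of_deg_mul_lt hδadd hf (hdiff ▸ S.deg_sub_lt (S.deg_rmod_lt hf x) hr)
  rwa [hq, zero_mul, eq_comm, sub_eq_zero] at hdiff

theorem rmod_eq_rmod_iff (hδadd : ∀ x y : D, δ (x + y) = δ x + δ y) {f x y : R} {m : ℕ}
    (hf : S.MonicDeg f m) : S.rmod x f = S.rmod y f ↔ ∃ q, x - y = q * f := by
  obtain ⟨qy, hqy⟩ := S.exists_sub_rmod_eq_mul (S.ne_zero_of_monicDeg hf) y
  constructor
  · intro h
    obtain ⟨qx, hqx⟩ := S.exists_sub_rmod_eq_mul (S.ne_zero_of_monicDeg hf) x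
    exact ⟨qx - qy, by rw [sub_mul, ← hqx, ← hqy, h]; abel⟩
  · rintro ⟨q, hq⟩
    exact S.rmod_eq_of_sub_eq_mul hδadd hf (q := q + qy) (by rw [add_mul, ← hq, ← hqy]; abel)
      (S.deg_rmod_lt hf y)

def IsSemiInvariant (f : R) (c : D) : Prop := ∃ c' : D, f * S.ι c = S.ι c' * f

theorem pmul_pmul_iota_of_isSemiInvariant (hδadd : ∀ x y : D, δ (x + y) = δ x + δ y)
    {f : R} {m : ℕ} {c : D} (hf : S.MonicDeg f m) (hc : S.IsSemiInvariant f c) (a b : R) :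
    S.pmul f (S.pmul f a b) (S.ι c) = S.pmul f a (S.pmul f b (S.ι c)) := by
  obtain ⟨c', hc'⟩ := hc
  obtain ⟨q₁, hq₁⟩ := S.exists_sub_rmod_eq_mul (S.ne_zero_of_monicDeg hf) (a * b)
  obtain ⟨q₂, hq₂⟩ := S.exists_sub_rmod_eq_mul (S.ne_zero_of_monicDeg hf) (b * S.ι c)
  refine (S.rmod_eq_rmod_iff hδadd hf).mpr ⟨a * q₂ - q₁ * S.ι c', ?_⟩
  rw [pmul, pmul, ← sub_sub_cancel (a * b) (S.rmod (a * b) f),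
    ← sub_sub_cancel (b * S.ι c) (S.rmod (b * S.ι c) f), hq₁, hq₂,
    sub_mul, mul_assoc q₁, hc', mul_sub]
  noncomm_ring

theorem mem_carr_of_deg_le {f x : R} {m n : ℕ} (hf : S.MonicDeg f m) (hx : S.deg x ≤ n)
    (hn : n < m) : x ∈ S.carr f := by
  change S.deg x < S.deg f
  rw [hf.2]
  exact hx.trans_lt (by exact_mod_cast hn)

theorem iota_mem_NucR_of_isSemiInvariant (hδadd : ∀ x y : D, δ (x + y) = δ x + δ y)
    {f : R} {m : ℕ} {c : D} (hf : S.MonicDeg f m) (hm : 0 < m) (hc : S.IsSemiInvariant f c) :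
    S.ι c ∈ S.NucR f :=
  ⟨S.mem_carr_of_deg_le hf (S.deg_iota_le c) hm,
    fun a _ b _ => S.pmul_pmul_iota_of_isSemiInvariant hδadd hf hc a b⟩

theorem isSemiInvariant_of_mul_iota_eq (hδadd : ∀ x y : D, δ (x + y) = δ x + δ y)
    {f q : R} {m : ℕ} {c : D} (hf : S.MonicDeg f m) (h : f * S.ι c = q * f) :
    S.IsSemiInvariant f c := by
  have hdeg : S.deg (q * f) ≤ m := by
    simpa [h] using S.deg_mul_le hδadd hf.2.le (S.deg_iota_le c)
  exact ⟨S.coeff q 0, by rw [h, ← S.eq_iota_of_deg_mul_le hδadd hf hdeg]⟩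

theorem isSemiInvariant_of_iota_mem_NucR (hδadd : ∀ x y : D, δ (x + y) = δ x + δ y)
    {f : R} {m : ℕ} {c : D} (hf : S.MonicDeg f m) (hm : 1 < m) (hc : S.ι c ∈ S.NucR f) :
    S.IsSemiInvariant f c := by
  have ht : ∀ {i}, i < m → S.t ^ i ∈ S.carr f := S.mem_carr_of_deg_le hf (S.deg_t_pow_le _)
  have hassoc := hc.2 (S.t ^ (m - 1)) (ht (by omega)) S.t (pow_one S.t ▸ ht hm)
  have htt : S.pmul f (S.t ^ (m - 1)) S.t = S.t ^ m - f :=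
    S.rmod_eq_of_sub_eq_mul hδadd hf (q := 1)
      (by rw [← pow_succ, Nat.sub_add_cancel (by omega), sub_sub_cancel, one_mul])
      (S.deg_t_pow_sub_lt hf)
  have htc : S.pmul f S.t (S.ι c) = S.t * S.ι c :=
    S.rmod_eq_of_sub_eq_mul hδadd hf (q := 0) (by rw [sub_self, zero_mul])
      ((S.deg_mul_le hδadd (pow_one S.t ▸ S.deg_t_pow_le 1) (S.deg_iota_le c)).trans_lt
        (by exact_mod_cast hm))
  rw [htt, htc, pmul, pmul, ← mul_assoc, ← pow_succ, Nat.sub_add_cancel (by omega)] at hassoc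
  obtain ⟨q, hq⟩ := (S.rmod_eq_rmod_iff hδadd hf).mp hassoc.symm
  exact S.isSemiInvariant_of_mul_iota_eq hδadd hf (q := q)
    (by rw [← hq, sub_mul, sub_sub_cancel])

theorem isSemiInvariant_iff_iota_mem_NucR (hδadd : ∀ x y : D, δ (x + y) = δ x + δ y)
    {f : R} {m : ℕ} {c : D} (hf : S.MonicDeg f m) (hm : 1 < m) :
    S.IsSemiInvariant f c ↔ S.ι c ∈ S.NucR f :=
  ⟨S.iota_mem_NucR_of_isSemiInvariant hδadd hf (by omega),
    S.isSemiInvariant_of_iota_mem_NucR hδadd hf hm⟩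

theorem isSemiInvariant_iff_coeff {f : R} {c : D} :
    S.IsSemiInvariant f c ↔ ∃ c' : D, ∀ k, S.coeff (f * S.ι c) k = c' * S.coeff f k :=
  exists_congr fun c' => ⟨fun h k => by rw [h, S.coeff_iota_mul],
    fun h => S.coeff_injective <| Finsupp.ext fun k => by rw [h, S.coeff_iota_mul]⟩

section TPowSubSum

variable (m : ℕ) (a : ℕ → D)

theorem coeff_t_pow_sub_sum (k : ℕ) :
    S.coeff (S.t ^ m - ∑ i ∈ Finset.range m, S.ι (a i) * S.t ^ i) k =
      (if k = m then 1 else 0) - if k < m then a k else 0 := by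
  simp only [S.coeff_sub, S.coeff_finset_sum, S.coeff_t_pow, S.coeff_monomial,
    Finsupp.sub_apply, Finsupp.finsetSum_apply, Finsupp.single_apply, Finset.sum_ite_eq,
    Finset.mem_range, eq_comm]

theorem monicDeg_t_pow_sub_sum :
    S.MonicDeg (S.t ^ m - ∑ i ∈ Finset.range m, S.ι (a i) * S.t ^ i) m := by
  have hm : S.coeff (S.t ^ m - ∑ i ∈ Finset.range m, S.ι (a i) * S.t ^ i) m = 1 := by
    simp [S.coeff_t_pow_sub_sum]
  refine ⟨hm, le_antisymm ((S.deg_le_iff _ m).mpr fun k hk => ?_)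
    (S.le_deg_of_coeff_ne_zero (hm ▸ one_ne_zero))⟩
  rw [S.coeff_t_pow_sub_sum, if_neg (by omega), if_neg (by omega), sub_zero]

theorem coeff_t_pow_sub_sum_mul_iota (hδadd : ∀ x y : D, δ (x + y) = δ x + δ y)
    (c : D) (k : ℕ) :
    S.coeff ((S.t ^ m - ∑ i ∈ Finset.range m, S.ι (a i) * S.t ^ i) * S.ι c) k =
      Delta σ δ m k c - ∑ i ∈ Finset.range m, a i * Delta σ δ i k c := by
  simp only [sub_mul, Finset.sum_mul, mul_assoc, S.coeff_sub, S.coeff_finset_sum,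
    Finsupp.sub_apply, Finsupp.finsetSum_apply, S.coeff_iota_mul, S.coeff_t_pow_mul_iota hδadd]

theorem isSemiInvariant_t_pow_sub_sum_iff (hδadd : ∀ x y : D, δ (x + y) = δ x + δ y)
    (c : D) :
    S.IsSemiInvariant (S.t ^ m - ∑ i ∈ Finset.range m, S.ι (a i) * S.t ^ i) c ↔
      ∀ k < m, (⇑σ)^[m] c * a k =
        (∑ j ∈ Finset.Ico k m, a j * Delta σ δ j k c) - Delta σ δ m k c := by
  have hlow : ∀ n k, n ≤ k → ∑ i ∈ Finset.range n, a i * Delta σ δ i k c = 0 :=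
    fun n k hk => Finset.sum_eq_zero fun i hi => by
      rw [Delta_eq_zero_of_lt hδadd (by simp at hi; omega), mul_zero]
  have hIco : ∀ k ≤ m, ∑ i ∈ Finset.range m, a i * Delta σ δ i k c =
      ∑ i ∈ Finset.Ico k m, a i * Delta σ δ i k c := fun k hk => by
    rw [← Finset.sum_range_add_sum_Ico _ hk, hlow k k le_rfl, zero_add]
  simp only [S.isSemiInvariant_iff_coeff, S.coeff_t_pow_sub_sum_mul_iota m a hδadd,
    S.coeff_t_pow_sub_sum]
  constructor
  · rintro ⟨c', h⟩ k hk
    have hc' : (⇑σ)^[m] c = c' := by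
      simpa [hlow m m le_rfl, Delta_self hδadd] using h m
    have hk' := h k
    rw [if_neg hk.ne, if_pos hk, hIco k hk.le, mul_sub, mul_zero, zero_sub] at hk'
    rw [hc', ← neg_sub, hk', neg_neg]
  · intro h
    refine ⟨(⇑σ)^[m] c, fun k => ?_⟩
    rcases lt_trichotomy k m with hk | rfl | hk
    · rw [if_neg hk.ne, if_pos hk, hIco k hk.le, mul_sub, mul_zero, zero_sub, h k hk, neg_sub]
    · simp [hlow k k le_rfl, Delta_self hδadd]
    · rw [if_neg hk.ne', if_neg hk.not_gt, Delta_eq_zero_of_lt hδadd hk, hlow m k hk.le]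
      simp

end TPowSubSum

end SkewPolyData

theorem statement_13_general (D R : Type) [DivisionRing D] [Ring R]
    (σ : D →+* D)
    (δ : D → D) (hδadd : ∀ x y : D, δ (x + y) = δ x + δ y)
    (S : SkewPolyData D σ δ R)
    (m : ℕ) (hm : 1 < m) (a : ℕ → D) (f : R)
    (hf : f = S.t ^ m - ∑ i ∈ Finset.range m, S.ι (a i) * S.t ^ i)
    (c : D) :
    ((∃ c' : D, f * S.ι c = S.ι c' * f) ↔ S.ι c ∈ S.NucR f) ∧
    ((∃ c' : D, f * S.ι c = S.ι c' * f) ↔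
      ∀ k : ℕ, k < m →
        (⇑σ)^[m] c * a k =
          (∑ j ∈ Finset.Ico k m, a j * Delta σ δ j k c) - Delta σ δ m k c) := by
  subst hf
  exact ⟨S.isSemiInvariant_iff_iota_mem_NucR hδadd (S.monicDeg_t_pow_sub_sum m a) hm,
    S.isSemiInvariant_t_pow_sub_sum_iff m a hδadd c⟩

theorem statement_13 (D R : Type) [DivisionRing D] [Ring R]
    (σ : D →+* D) (hσinj : Function.Injective ⇑σ)
    (δ : D → D) (hδadd : ∀ x y : D, δ (x + y) = δ x + δ y)
    (hδleib : ∀ x y : D, δ (x * y) = σ x * δ y + δ x * y)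
    (S : SkewPolyData D σ δ R)
    (m : ℕ) (hm : 1 < m) (a : ℕ → D) (f : R)
    (hf : f = S.t ^ m - ∑ i ∈ Finset.range m, S.ι (a i) * S.t ^ i)
    (c : D) :
    ((∃ c' : D, f * S.ι c = S.ι c' * f) ↔ S.ι c ∈ S.NucR f) ∧
    ((∃ c' : D, f * S.ι c = S.ι c' * f) ↔
      ∀ k : ℕ, k < m →
        (⇑σ)^[m] c * a k =
          (∑ j ∈ Finset.Ico k m, a j * Delta σ δ j k c) - Delta σ δ m k c) :=
  statement_13_general D R σ δ hδadd S m hm a f hf c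
end

section
/- Let f(t) = t^m − ∑_{i=0}^{m-1} a_i t^i ∈ R = D[t;σ] be monic of degree m > 1. Then a_i ∈ Fix(σ) for all i ∈ {0,1,…,m−1} if and only if t ∈ Nuc_r(S_f). -/
section Aux
variable {D R : Type} [DivisionRing D] [Ring R] {σ : D →+* D}
variable (S : SkewPolyData D σ (fun _ => 0) R)

lemma aux_t_mul (a : D) : S.t * S.ι a = S.ι (σ a) * S.t := by
  have := S.t_mul a
  simpa using this

lemma aux_tpow_mul (i : ℕ) (a : D) : S.t ^ i * S.ι a = S.ι (σ^[i] a) * S.t ^ i := by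
  induction i with
  | zero => simp
  | succ n ih =>
    rw [pow_succ', mul_assoc, ih, ← mul_assoc, aux_t_mul, Function.iterate_succ_apply',
      mul_assoc, ← pow_succ']

lemma aux_mono_mul (a b : D) (i j : ℕ) :
    (S.ι a * S.t ^ i) * (S.ι b * S.t ^ j) = S.ι (a * σ^[i] b) * S.t ^ (i + j) := by
  rw [mul_assoc, ← mul_assoc (S.t ^ i), aux_tpow_mul, mul_assoc, ← pow_add, ← mul_assoc,
    ← map_mul]

lemma aux_coeff_mono (a : D) (i : ℕ) : S.coeff (S.ι a * S.t ^ i) = Finsupp.single i a := by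
  have h : ((Finsupp.single i a).sum fun k c => S.ι c * S.t ^ k) = S.ι a * S.t ^ i :=
    Finsupp.sum_single_index (by simp)
  rw [← h, S.coeff_sum]

lemma aux_coeff_zero : S.coeff 0 = 0 := by
  have h : ((0 : ℕ →₀ D).sum fun k c => S.ι c * S.t ^ k) = (0 : R) := Finsupp.sum_zero_index
  rw [← h, S.coeff_sum]

lemma aux_coeff_add (x y : R) : S.coeff (x + y) = S.coeff x + S.coeff y := by
  conv_lhs => rw [← S.sum_coeff x, ← S.sum_coeff y]
  rw [← Finsupp.sum_add_index' (by simp) (fun i b c => by rw [map_add, add_mul]), S.coeff_sum]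

noncomputable def auxHom : R →+ (ℕ →₀ D) where
  toFun := S.coeff
  map_zero' := aux_coeff_zero S
  map_add' := aux_coeff_add S

lemma aux_coeff_sub (x y : R) : S.coeff (x - y) = S.coeff x - S.coeff y :=
  map_sub (auxHom S) x y

lemma aux_coeff_inj : Function.Injective S.coeff :=
  Function.LeftInverse.injective (g := fun c : ℕ →₀ D => c.sum fun i a => S.ι a * S.t ^ i)
    S.sum_coeff

lemma aux_eq_zero_iff (x : R) : x = 0 ↔ S.coeff x = 0 :=
  ⟨fun h => h ▸ aux_coeff_zero S, fun h => aux_coeff_inj S (h.trans (aux_coeff_zero S).symm)⟩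

lemma aux_iter_zero (i : ℕ) : σ^[i] (0 : D) = 0 := by
  induction i with
  | zero => rfl
  | succ n ih => rw [Function.iterate_succ_apply', ih, map_zero]

lemma aux_iter_one (i : ℕ) : σ^[i] (1 : D) = 1 := by
  induction i with
  | zero => rfl
  | succ n ih => rw [Function.iterate_succ_apply', ih, map_one]

lemma aux_iter_ne_zero {a : D} (ha : a ≠ 0) (i : ℕ) : σ^[i] a ≠ 0 := by
  induction i with
  | zero => exact ha
  | succ n ih =>
    rw [Function.iterate_succ_apply']
    exact fun h => ih (σ.injective (by simpa using h))

lemma aux_mul_eq (x y : R) :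
    x * y = (S.coeff y).sum fun j b => (S.coeff x).sum fun i a =>
      S.ι (a * σ^[i] b) * S.t ^ (i + j) := by
  conv_lhs => rw [← S.sum_coeff y]
  rw [Finsupp.mul_sum]
  refine Finsupp.sum_congr fun j _ => ?_
  conv_lhs => rw [← S.sum_coeff x]
  rw [Finsupp.sum_mul]
  exact Finsupp.sum_congr fun i _ => aux_mono_mul S _ _ _ _

lemma aux_coeff_mul_apply (x y : R) (k : ℕ) :
    S.coeff (x * y) k = ∑ j ∈ (S.coeff y).support, ∑ i ∈ (S.coeff x).support,
      (if i + j = k then S.coeff x i * σ^[i] (S.coeff y j) else 0) := by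
  have h1 : S.coeff (x * y) = (S.coeff y).sum fun j b => (S.coeff x).sum fun i a =>
      Finsupp.single (i + j) (a * σ^[i] b) := by
    rw [aux_mul_eq S x y, show S.coeff = ⇑(auxHom S) from rfl, map_finsuppSum]
    refine Finsupp.sum_congr fun j _ => ?_
    rw [map_finsuppSum]
    exact Finsupp.sum_congr fun i _ => aux_coeff_mono S _ _
  rw [h1, Finsupp.sum_apply]
  rw [Finsupp.sum]
  refine Finset.sum_congr rfl fun j _ => ?_
  rw [Finsupp.sum_apply, Finsupp.sum]
  refine Finset.sum_congr rfl fun i _ => ?_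
  rw [Finsupp.single_apply]

lemma aux_supp_le {x : R} {d : ℕ} (hx : ∀ i, d < i → S.coeff x i = 0)
    {i : ℕ} (hi : i ∈ (S.coeff x).support) : i ≤ d := by
  by_contra hc
  exact Finsupp.mem_support_iff.mp hi (hx i (not_le.mp hc))

lemma aux_coeff_mul_high (x y : R) (dx dy : ℕ)
    (hx : ∀ i, dx < i → S.coeff x i = 0) (hy : ∀ j, dy < j → S.coeff y j = 0)
    (k : ℕ) (hk : dx + dy < k) : S.coeff (x * y) k = 0 := by
  rw [aux_coeff_mul_apply]
  refine Finset.sum_eq_zero fun j hj => Finset.sum_eq_zero fun i hi => ?_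
  have h1 := aux_supp_le S hx hi
  have h2 := aux_supp_le S hy hj
  rw [if_neg (by omega)]

lemma aux_coeff_mul_top (x y : R) (dx dy : ℕ)
    (hx : ∀ i, dx < i → S.coeff x i = 0) (hy : ∀ j, dy < j → S.coeff y j = 0) :
    S.coeff (x * y) (dx + dy) = S.coeff x dx * σ^[dx] (S.coeff y dy) := by
  rw [aux_coeff_mul_apply]
  rw [Finset.sum_eq_single dy (fun j hj hne => Finset.sum_eq_zero fun i hi => by
    have h1 := aux_supp_le S hx hi
    have h2 := aux_supp_le S hy hj
    have h2' : j < dy := lt_of_le_of_ne h2 hne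
    rw [if_neg (by omega)])
    (fun hdy => Finset.sum_eq_zero fun i hi => by
      rw [Finsupp.notMem_support_iff.mp hdy, aux_iter_zero, mul_zero, ite_self])]
  rw [Finset.sum_eq_single dx (fun i hi hne => by
    have h1 := aux_supp_le S hx hi
    rw [if_neg (by omega)])
    (fun hdx => by rw [Finsupp.notMem_support_iff.mp hdx, zero_mul, if_pos rfl])]
  rw [if_pos rfl]

lemma aux_deg_lt_iff (x : R) (n : ℕ) :
    S.deg x < (n : WithBot ℕ) ↔ ∀ j, n ≤ j → S.coeff x j = 0 := by
  constructor
  · intro h j hj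
    by_contra hc
    have h1 : ((j : ℕ) : WithBot ℕ) ≤ S.deg x := Finset.le_max (Finsupp.mem_support_iff.mpr hc)
    have h2 : ((j : ℕ) : WithBot ℕ) < (n : WithBot ℕ) := lt_of_le_of_lt h1 h
    have : j < n := by exact_mod_cast h2
    omega
  · intro h
    rcases (S.coeff x).support.eq_empty_or_nonempty with he | hne
    · have : S.deg x = ⊥ := by rw [SkewPolyData.deg, he, Finset.max_empty]
      rw [this]
      exact_mod_cast WithBot.bot_lt_coe (n : ℕ)
    · obtain ⟨d, hd⟩ := Finset.max_of_nonempty hne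
      have hdm : d ∈ (S.coeff x).support := Finset.mem_of_max hd
      have hdn : d < n := by
        by_contra hc
        exact Finsupp.mem_support_iff.mp hdm (h d (not_lt.mp hc))
      rw [SkewPolyData.deg, hd, Nat.cast_withBot]
      exact_mod_cast hdn

lemma aux_deg_le_iff (x : R) (n : ℕ) :
    S.deg x ≤ (n : WithBot ℕ) ↔ ∀ j, n < j → S.coeff x j = 0 := by
  constructor
  · intro h j hj
    by_contra hc
    have h1 : ((j : ℕ) : WithBot ℕ) ≤ S.deg x := Finset.le_max (Finsupp.mem_support_iff.mpr hc)
    have h2 : ((j : ℕ) : WithBot ℕ) ≤ (n : WithBot ℕ) := le_trans h1 h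
    have : j ≤ n := by exact_mod_cast h2
    omega
  · intro h
    rcases (S.coeff x).support.eq_empty_or_nonempty with he | hne
    · have : S.deg x = ⊥ := by rw [SkewPolyData.deg, he, Finset.max_empty]
      rw [this]
      exact bot_le
    · obtain ⟨d, hd⟩ := Finset.max_of_nonempty hne
      have hdm : d ∈ (S.coeff x).support := Finset.mem_of_max hd
      have hdn : d ≤ n := by
        by_contra hc
        exact Finsupp.mem_support_iff.mp hdm (h d (not_le.mp hc))
      rw [SkewPolyData.deg, hd, Nat.cast_withBot]
      exact_mod_cast hdn

lemma aux_deg_tpow (i : ℕ) : S.deg (S.t ^ i) = (i : WithBot ℕ) := by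
  have h : S.coeff (S.t ^ i) = Finsupp.single i 1 := by
    rw [← aux_coeff_mono S 1 i, map_one, one_mul]
  rw [SkewPolyData.deg, h, Finsupp.support_single_ne_zero i one_ne_zero,
    Finset.max_singleton]
  exact_mod_cast rfl

lemma aux_fne {f : R} {m : ℕ} (hmonic : S.MonicDeg f m) : f ≠ 0 := by
  intro h
  have := hmonic.1
  rw [h, aux_coeff_zero S] at this
  simp at this

lemma aux_rmod_unique {f : R} {m : ℕ} (hmonic : S.MonicDeg f m)
    (x q r : R) (hx : x = q * f + r) (hr : S.deg r < (m : WithBot ℕ)) :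
    S.rmod x f = r := by
  have hftop : ∀ j, m < j → S.coeff f j = 0 := (aux_deg_le_iff S f m).mp (le_of_eq hmonic.2)
  obtain ⟨⟨q0, hq0⟩, hdeg⟩ := S.rmod_spec x f (aux_fne S hmonic)
  have hdeg' : S.deg (S.rmod x f) < (m : WithBot ℕ) := by
    have : S.deg (S.rmod x f) < S.deg f := hdeg
    rwa [hmonic.2] at this
  have hrm := (aux_deg_lt_iff S _ m).mp hdeg'
  have hrr := (aux_deg_lt_iff S _ m).mp hr
  have key : (q - q0) * f = S.rmod x f - r := by
    have h2 : q * f + r = q0 * f + S.rmod x f := hx.symm.trans hq0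
    rw [sub_mul, sub_eq_sub_iff_add_eq_add, h2, add_comm]
  by_cases hq : q - q0 = 0
  · rw [hq, zero_mul] at key
    exact sub_eq_zero.mp key.symm
  · exfalso
    have hsupp : ((S.coeff (q - q0)).support).Nonempty :=
      Finsupp.support_nonempty_iff.mpr (fun hc => hq ((aux_eq_zero_iff S _).mpr hc))
    obtain ⟨d, hd⟩ := Finset.max_of_nonempty hsupp
    have hqtop : ∀ i, d < i → S.coeff (q - q0) i = 0 := by
      intro i hi
      by_contra hc
      have := Finset.le_max_of_eq (Finsupp.mem_support_iff.mpr hc) hd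
      omega
    have hdmem : d ∈ (S.coeff (q - q0)).support := Finset.mem_of_max hd
    have h1 : S.coeff ((q - q0) * f) (d + m) = S.coeff (q - q0) d := by
      rw [aux_coeff_mul_top S _ _ d m hqtop hftop, hmonic.1, aux_iter_one, mul_one]
    have h2 : S.coeff (S.rmod x f - r) (d + m) = 0 := by
      rw [aux_coeff_sub, Finsupp.sub_apply, hrm _ (by omega), hrr _ (by omega), sub_zero]
    rw [key, h2] at h1
    exact Finsupp.mem_support_iff.mp hdmem h1.symm

lemma aux_const_mul_coeff (c : D) (y : R) (k : ℕ) :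
    S.coeff (S.ι c * y) k = c * S.coeff y k := by
  have h1 : S.ι c * y = (S.coeff y).sum fun j b => S.ι (c * b) * S.t ^ j := by
    conv_lhs => rw [← S.sum_coeff y]
    rw [Finsupp.mul_sum]
    refine Finsupp.sum_congr fun j _ => ?_
    rw [← mul_assoc, ← map_mul]
  have h2 : S.coeff (S.ι c * y) = (S.coeff y).sum fun j b => Finsupp.single j (c * b) := by
    rw [h1, show S.coeff = ⇑(auxHom S) from rfl, map_finsuppSum]
    exact Finsupp.sum_congr fun j _ => aux_coeff_mono S _ _
  rw [h2, Finsupp.sum_apply, Finsupp.sum]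
  by_cases hk : k ∈ (S.coeff y).support
  · rw [Finset.sum_eq_single k (fun j hj hne => by rw [Finsupp.single_apply, if_neg hne])
      (fun h => absurd hk h), Finsupp.single_apply, if_pos rfl]
  · rw [Finsupp.notMem_support_iff.mp hk, mul_zero]
    exact Finset.sum_eq_zero fun j hj => by
      rw [Finsupp.single_apply, if_neg (by rintro rfl; exact hk hj)]

end Aux

theorem statement_15 (D R : Type) [DivisionRing D] [Ring R]
    (σ : D →+* D) (hσinj : Function.Injective ⇑σ)
    (S : SkewPolyData D σ (fun _ => 0) R)
    (m : ℕ) (hm : 1 < m) (a : ℕ → D) (f : R)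
    (hf : f = S.t ^ m - ∑ i ∈ Finset.range m, S.ι (a i) * S.t ^ i)
    (hmonic : S.MonicDeg f m) :
    (∀ i, i < m → σ (a i) = a i) ↔ S.t ∈ S.NucR f := by
  classical
  set g : R := ∑ i ∈ Finset.range m, S.ι (a i) * S.t ^ i with hg
  have hfne : f ≠ 0 := aux_fne S hmonic
  have hfm : S.coeff f m = 1 := hmonic.1
  have hdegf : S.deg f = (m : WithBot ℕ) := hmonic.2
  have hftop : ∀ j, m < j → S.coeff f j = 0 := (aux_deg_le_iff S f m).mp (le_of_eq hdegf)
  have hcg : ∀ j, S.coeff g j = if j < m then a j else 0 := by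
    intro j
    have h1 : S.coeff g = ∑ i ∈ Finset.range m, Finsupp.single i (a i) := by
      rw [hg, show S.coeff = ⇑(auxHom S) from rfl, map_sum]
      exact Finset.sum_congr rfl fun i _ => aux_coeff_mono S _ _
    rw [h1, Finset.sum_apply']
    simp only [Finsupp.single_apply]
    rw [Finset.sum_ite_eq' (Finset.range m) j a]
    simp [Finset.mem_range]
  have hgtop : ∀ j, m ≤ j → S.coeff g j = 0 := fun j hj => by
    rw [hcg, if_neg (by omega)]
  have hdegg : S.deg g < (m : WithBot ℕ) := (aux_deg_lt_iff S g m).mpr hgtop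
  have hcf : ∀ j, S.coeff f j = (if j = m then 1 else 0) - (if j < m then a j else 0) := by
    intro j
    have hctm : S.coeff (S.t ^ m) = Finsupp.single m 1 := by
      rw [← aux_coeff_mono S 1 m, map_one, one_mul]
    rw [hf, aux_coeff_sub, Finsupp.sub_apply, hctm, Finsupp.single_apply, hcg]
    congr 1
    by_cases hjm : j = m
    · rw [if_pos hjm.symm, if_pos hjm]
    · rw [if_neg (Ne.symm hjm), if_neg hjm]
  have hrmodtm : S.rmod (S.t ^ m) f = g :=
    aux_rmod_unique S hmonic _ 1 g (by rw [hf, one_mul, sub_add_cancel]) hdegg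
  have htcarr : S.t ∈ S.carr f := by
    show S.deg S.t < S.deg f
    rw [hdegf, ← pow_one S.t, aux_deg_tpow]
    exact_mod_cast hm
  constructor
  · -- coefficients fixed by σ implies t in right nucleus
    intro hfix
    have hfixg : S.t * g = g * S.t := by
      rw [hg, Finset.mul_sum, Finset.sum_mul]
      refine Finset.sum_congr rfl fun i hi => ?_
      have e1 : S.t * (S.ι (a i) * S.t ^ i) = S.ι (σ (a i)) * S.t ^ (i+1) := by
        rw [← mul_assoc, aux_t_mul, mul_assoc, ← pow_succ']
      have e2 : (S.ι (a i) * S.t ^ i) * S.t = S.ι (a i) * S.t ^ (i+1) := by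
        rw [mul_assoc, ← pow_succ]
      rw [e1, e2, hfix i (Finset.mem_range.mp hi)]
    have hft : f * S.t = S.t * f := by
      rw [hf, sub_mul, mul_sub, ← pow_succ, ← pow_succ', hfixg]
    refine ⟨htcarr, fun p _ q _ => ?_⟩
    obtain ⟨⟨q1, hq1⟩, _⟩ := S.rmod_spec (p * q) f hfne
    obtain ⟨⟨q2, hq2⟩, _⟩ := S.rmod_spec (q * S.t) f hfne
    obtain ⟨⟨q3, hq3⟩, hd3⟩ := S.rmod_spec (S.rmod (p * q) f * S.t) f hfne
    show S.rmod (S.rmod (p * q) f * S.t) f = S.rmod (p * S.rmod (q * S.t) f) f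
    have hd3' : S.deg (S.rmod (S.rmod (p * q) f * S.t) f) < (m : WithBot ℕ) := by
      have h9 : S.deg (S.rmod (S.rmod (p * q) f * S.t) f) < S.deg f := hd3
      rwa [hdegf] at h9
    have h1 : S.rmod (q * S.t) f = q * S.t - q2 * f := eq_sub_of_add_eq' hq2.symm
    have key : p * S.rmod (q * S.t) f =
        (q1 * S.t + q3 - p * q2) * f + S.rmod (S.rmod (p * q) f * S.t) f := by
      calc p * S.rmod (q * S.t) f = p * (q * S.t) - p * (q2 * f) := by rw [h1, mul_sub]
        _ = (q1 * f + S.rmod (p * q) f) * S.t - p * (q2 * f) := by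
            rw [← mul_assoc, ← hq1]
        _ = q1 * (f * S.t) + S.rmod (p * q) f * S.t - p * (q2 * f) := by
            rw [add_mul, mul_assoc]
        _ = q1 * (S.t * f) + (q3 * f + S.rmod (S.rmod (p * q) f * S.t) f) - p * (q2 * f) := by
            rw [hft, ← hq3]
        _ = (q1 * S.t + q3 - p * q2) * f + S.rmod (S.rmod (p * q) f * S.t) f := by
            noncomm_ring
    exact (aux_rmod_unique S hmonic _ _ _ key hd3').symm
  · -- t in right nucleus implies coefficients fixed by σ
    rintro ⟨_, hass⟩
    have hbcarr : S.t ^ (m-1) ∈ S.carr f := by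
      show S.deg (S.t ^ (m-1)) < S.deg f
      rw [hdegf, aux_deg_tpow]
      exact_mod_cast Nat.sub_lt (by omega) one_pos
    have h1 : S.pmul f S.t (S.t ^ (m-1)) = g := by
      show S.rmod (S.t * S.t ^ (m-1)) f = g
      rw [← pow_succ', show m - 1 + 1 = m from by omega, hrmodtm]
    have h2 : S.pmul f (S.t ^ (m-1)) S.t = g := by
      show S.rmod (S.t ^ (m-1) * S.t) f = g
      rw [← pow_succ, show m - 1 + 1 = m from by omega, hrmodtm]
    have hkey := hass S.t htcarr (S.t ^ (m-1)) hbcarr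
    rw [h1, h2] at hkey
    have hkey' : S.rmod (g * S.t) f = S.rmod (S.t * g) f := hkey
    obtain ⟨⟨q1, hq1⟩, _⟩ := S.rmod_spec (g * S.t) f hfne
    obtain ⟨⟨q2, hq2⟩, _⟩ := S.rmod_spec (S.t * g) f hfne
    have hhq : S.t * g - g * S.t = (q2 - q1) * f := by
      calc S.t * g - g * S.t
          = (q2 * f + S.rmod (S.t * g) f) - (q1 * f + S.rmod (g * S.t) f) := by
            rw [← hq1, ← hq2]
        _ = (q2 * f + S.rmod (S.t * g) f) - (q1 * f + S.rmod (S.t * g) f) := by rw [hkey']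
        _ = (q2 - q1) * f := by noncomm_ring
    have hch : S.coeff (S.t * g - g * S.t)
        = ∑ i ∈ Finset.range m, Finsupp.single (i+1) (σ (a i) - a i) := by
      have e : S.t * g - g * S.t = ∑ i ∈ Finset.range m, S.ι (σ (a i) - a i) * S.t ^ (i+1) := by
        rw [hg, Finset.mul_sum, Finset.sum_mul, ← Finset.sum_sub_distrib]
        refine Finset.sum_congr rfl fun i _ => ?_
        have e1 : S.t * (S.ι (a i) * S.t ^ i) = S.ι (σ (a i)) * S.t ^ (i+1) := by
          rw [← mul_assoc, aux_t_mul, mul_assoc, ← pow_succ']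
        have e2 : (S.ι (a i) * S.t ^ i) * S.t = S.ι (a i) * S.t ^ (i+1) := by
          rw [mul_assoc, ← pow_succ]
        rw [e1, e2, map_sub, sub_mul]
      rw [e, show S.coeff = ⇑(auxHom S) from rfl, map_sum]
      exact Finset.sum_congr rfl fun i _ => aux_coeff_mono S _ _
    have hchap : ∀ j, S.coeff (S.t * g - g * S.t) j
        = ∑ i ∈ Finset.range m, (if i + 1 = j then σ (a i) - a i else 0) := by
      intro j
      rw [hch, Finset.sum_apply']
      exact Finset.sum_congr rfl fun i _ => Finsupp.single_apply
    have hch0 : S.coeff (S.t * g - g * S.t) 0 = 0 := by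
      rw [hchap]
      exact Finset.sum_eq_zero fun i _ => by rw [if_neg (by omega)]
    have hchs : ∀ i, i < m → S.coeff (S.t * g - g * S.t) (i+1) = σ (a i) - a i := by
      intro i him
      rw [hchap, Finset.sum_eq_single i (fun b _ hbne => by rw [if_neg (by omega)])
        (fun hni => absurd (Finset.mem_range.mpr him) hni), if_pos rfl]
    have hchtop : ∀ j, m < j → S.coeff (S.t * g - g * S.t) j = 0 := by
      intro j hj
      rw [hchap]
      refine Finset.sum_eq_zero fun i hi => ?_
      have := Finset.mem_range.mp hi
      rw [if_neg (by omega)]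
    have hq0 : q2 - q1 = 0 := by
      by_contra hqne
      have hsupp : ((S.coeff (q2 - q1)).support).Nonempty :=
        Finsupp.support_nonempty_iff.mpr (fun hc => hqne ((aux_eq_zero_iff S _).mpr hc))
      obtain ⟨d, hd⟩ := Finset.max_of_nonempty hsupp
      have hqtop : ∀ i, d < i → S.coeff (q2 - q1) i = 0 := fun i hi => by
        by_contra hc
        have := Finset.le_max_of_eq (Finsupp.mem_support_iff.mpr hc) hd
        omega
      have hdne : S.coeff (q2 - q1) d ≠ 0 := Finsupp.mem_support_iff.mp (Finset.mem_of_max hd)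
      have htopco : S.coeff (S.t * g - g * S.t) (d + m) = S.coeff (q2 - q1) d := by
        rw [hhq, aux_coeff_mul_top S _ _ d m hqtop hftop, hfm, aux_iter_one, mul_one]
      have hd0 : d = 0 := by
        by_contra hdne0
        exact hdne (htopco.symm.trans (hchtop (d+m) (by omega)))
      subst hd0
      set c := S.coeff (q2 - q1) 0 with hcc
      have hcne : c ≠ 0 := hdne
      have hqc : q2 - q1 = S.ι c := by
        have hco : S.coeff (q2 - q1) = Finsupp.single 0 c := by
          ext j
          rcases Nat.eq_zero_or_pos j with rfl | hj
          · rw [Finsupp.single_apply, if_pos rfl]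
          · rw [hqtop j (by omega), Finsupp.single_apply, if_neg (by omega)]
        have h8 := S.sum_coeff (q2 - q1)
        rw [hco, Finsupp.sum_single_index (by simp)] at h8
        rw [← h8, pow_zero, mul_one]
      have hcoefs : ∀ j, S.coeff (S.t * g - g * S.t) j = c * S.coeff f j := by
        intro j
        rw [hhq, hqc, aux_const_mul_coeff]
      have hane : ∀ i, i < m → a i = 0 := by
        intro i
        induction i with
        | zero =>
          intro _
          have h0 := hcoefs 0
          rw [hch0] at h0
          rw [hcf 0, if_neg (show (0:ℕ) ≠ m by omega), if_pos (show 0 < m by omega),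
            zero_sub, mul_neg] at h0
          have h0' : c * a 0 = 0 := by
            have := h0.symm
            rwa [neg_eq_zero] at this
          rcases mul_eq_zero.mp h0' with hc | ha
          · exact absurd hc hcne
          · exact ha
        | succ n ihn =>
          intro hsm
          have hnm : n < m := by omega
          have h0 := hcoefs (n+1)
          rw [hchs n hnm, ihn hnm, map_zero, sub_zero] at h0
          rw [hcf (n+1), if_neg (show n + 1 ≠ m by omega), if_pos (show n + 1 < m by omega),
            zero_sub, mul_neg] at h0
          have h0' : c * a (n+1) = 0 := by
            have := h0.symm
            rwa [neg_eq_zero] at this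
          rcases mul_eq_zero.mp h0' with hc | ha
          · exact absurd hc hcne
          · exact ha
      have hfin := hcoefs m
      rw [hcf m, if_pos rfl, if_neg (lt_irrefl m), sub_zero, mul_one] at hfin
      have hm0 : S.coeff (S.t * g - g * S.t) m = 0 := by
        have h9 := hchs (m-1) (by omega)
        rw [show m - 1 + 1 = m from by omega, hane (m-1) (by omega), map_zero, sub_zero] at h9
        exact h9
      exact hcne (hfin.symm.trans hm0)
    have hh0 : S.t * g - g * S.t = 0 := by rw [hhq, hq0, zero_mul]
    intro i him
    have hz := hchs i him
    rw [hh0, aux_coeff_zero S] at hz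
    have hz' : σ (a i) - a i = 0 := by simpa using hz.symm
    exact sub_eq_zero.mp hz'
end
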